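/- arXiv:2204.08631 — 4 statements merged into one kernel-verified Lean document; each statement's English description precedes it below -/
import Mathlib

section
/- Let G be a graph such that both G and all its induced subgraphs have the property that for every vertex v, the set of non-neighbors of v induces a bipartite graph. Let m, q be positive integers. If every induced subgraph of G with clique number at most m is q-colorable, then every induced subgraph of G with clique number at most m+1 is (q+2)-colorable. In particular, if ω(G) ≤ m+1 and every induced subgraph of G with clique number at most m admits a proper q-coloring, then G admits a proper (q+2)-coloring. -/
open SimpleGraph

/-! Pick a vertex `v`. A clique in the neighbourhood of `v` extends by `v`, so the neighbourhood
has clique number at most `m` and takes `q` colours. Its complement consists of the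
non-neighbours of `v`, which induce a bipartite graph, together with `v` itself, which is
isolated there; so it takes two further colours. -/

namespace SimpleGraph

variable {V : Type*} {G : SimpleGraph V}

def Coloring.sumOfInduceCompl {α β : Type*} (s : Set V) [DecidablePred (· ∈ s)]
    (cs : (G.induce s).Coloring α) (cc : (G.induce sᶜ).Coloring β) : G.Coloring (α ⊕ β) :=
  Coloring.mk (fun x => if hx : x ∈ s then .inl (cs ⟨x, hx⟩) else .inr (cc ⟨x, hx⟩)) <| by
    intro x y hxy
    by_cases hx : x ∈ s <;> by_cases hy : y ∈ s
    · simpa [hx, hy] using cs.valid (G := G.induce s) (v := ⟨x, hx⟩) (w := ⟨y, hy⟩) hxy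
    · simp [hx, hy]
    · simp [hx, hy]
    · simpa [hx, hy] using cc.valid (G := G.induce sᶜ) (v := ⟨x, hx⟩) (w := ⟨y, hy⟩) hxy

theorem Colorable.of_induce_of_induce_compl {a b : ℕ} (s : Set V)
    (hs : (G.induce s).Colorable a) (hc : (G.induce sᶜ).Colorable b) : G.Colorable (a + b) := by
  classical
  obtain ⟨cs⟩ := hs
  obtain ⟨cc⟩ := hc
  simpa using (Coloring.sumOfInduceCompl s cs cc).colorable

theorem colorable_induce_compl_neighborSet {n : ℕ} (v : V)
    (h : (G.induce {w | w ≠ v ∧ ¬G.Adj v w}).Colorable (n + 1)) :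
    (G.induce (G.neighborSet v)ᶜ).Colorable (n + 1) := by
  classical
  obtain ⟨c⟩ := h
  refine ⟨Coloring.mk (fun w => if hw : w.1 = v then 0 else c ⟨w.1, hw, w.2⟩) ?_⟩
  rintro ⟨x, hx⟩ ⟨y, hy⟩ hxy
  have hxv : x ≠ v := by rintro rfl; exact hy hxy
  have hyv : y ≠ v := by rintro rfl; exact hx hxy.symm
  simpa [hxv, hyv] using c.valid (G := G.induce _) (v := ⟨x, hxv, hx⟩) (w := ⟨y, hyv, hy⟩) hxy

end SimpleGraph

theorem stmt4_general {V : Type*} (G : SimpleGraph V) (m q : ℕ)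
    (hbip : ∀ (s : Set V) (v : s),
      (((G.induce s).induce {w : s | w ≠ v ∧ ¬ (G.induce s).Adj v w})).Colorable 2)
    (hcol : ∀ s : Set V, (G.induce s).CliqueFree (m + 1) → (G.induce s).Colorable q) :
    ∀ s : Set V, (G.induce s).CliqueFree (m + 2) → (G.induce s).Colorable (q + 2) := by
  intro s hs
  rcases isEmpty_or_nonempty s with _ | ⟨⟨v⟩⟩
  · exact .of_isEmpty _
  have hN : (G.induce (s ∩ G.neighborSet v)).CliqueFree (m + 1) := by
    rw [cliqueFree_induce_iff] at hs ⊢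
    exact CliqueFreeOn.of_succ _ hs v.2
  have hNcol : ((G.induce s).induce ((G.induce s).neighborSet v)).Colorable q :=
    (hcol _ hN).of_hom ⟨fun w => ⟨w.1.1, w.1.2, w.2⟩, id⟩
  exact hNcol.of_induce_of_induce_compl _ (colorable_induce_compl_neighborSet v (hbip s v))

/-- If in every induced subgraph of `G` the non-neighborhood of every vertex induces a
bipartite graph, and every induced subgraph of `G` with clique number at most `m` is
`q`-colorable, then every induced subgraph of `G` with clique number at most `m+1`
(in particular `G` itself when `ω(G) ≤ m+1`) is `(q+2)`-colorable. -/
theorem stmt4 {V : Type*} (G : SimpleGraph V) (m q : ℕ) (hm : 0 < m) (hq : 0 < q)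
    (hbip : ∀ (s : Set V) (v : s),
      (((G.induce s).induce {w : s | w ≠ v ∧ ¬ (G.induce s).Adj v w})).Colorable 2)
    (hcol : ∀ s : Set V, (G.induce s).CliqueFree (m + 1) → (G.induce s).Colorable q) :
    ∀ s : Set V, (G.induce s).CliqueFree (m + 2) → (G.induce s).Colorable (q + 2) :=
  stmt4_general G m q hbip hcol
end

section
/- Let G be a (C_5, 2K_2)-free graph and let S_1, S_2, S_3 be sets of vertices outside a triangle {r_1, r_2, r_3}, where each vertex of S_j is adjacent (within the triangle) exactly to r_j. Assume additionally that G has no induced complement of C_6. If all three sets S_1, S_2, S_3 are nonempty, then S_1 ∪ S_2 ∪ S_3 is a stable set. -/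
/-!
Two adjacent vertices attached to the same triangle vertex `r i` form an induced `2K_2` with the
edge between the other two triangle vertices. If `x ∈ S i` and `y ∈ S j` are adjacent with
`i ≠ j`, pick `z` in the third set `S k`: according to whether `z` sees neither, exactly one, or
both of `x, y`, one finds an induced `2K_2` (on `x y` and `z r_k`), an induced `C_5` through
`z r_k` and the triangle vertex of the other endpoint, or an induced complement of `C_6` on
`x, r_j, z, r_i, y, r_k`.
-/

open SimpleGraph

def twoK2 : SimpleGraph (Fin 4) :=
  SimpleGraph.fromEdgeSet {s(0, 1), s(2, 3)}

instance : DecidableRel twoK2.Adj := fun _ _ => by unfold twoK2; infer_instance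

namespace SimpleGraph

variable {V : Type*} {G : SimpleGraph V}

/-- Vertices with equal images have equal neighbourhoods in `H`, so injectivity is automatic. -/
def Embedding.ofAdjIff {W : Type*} {H : SimpleGraph W}
    (hH : ∀ i j, (∀ k, H.Adj i k ↔ H.Adj j k) → i = j)
    (f : W → V) (hf : ∀ i j, G.Adj (f i) (f j) ↔ H.Adj i j) : H ↪g G where
  toFun := f
  inj' i j hij := hH i j fun k => by rw [← hf, ← hf, hij]
  map_rel_iff' := hf _ _

def twoK2Embedding {a b c d : V} (hab : G.Adj a b) (hcd : G.Adj c d) (hac : ¬G.Adj a c)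
    (had : ¬G.Adj a d) (hbc : ¬G.Adj b c) (hbd : ¬G.Adj b d) : twoK2 ↪g G :=
  Embedding.ofAdjIff (by decide) ![a, b, c, d] fun i j => by
    fin_cases i <;> fin_cases j <;> simp [twoK2, adj_comm, *]

def cycleGraphFiveEmbedding {a b c d e : V} (hab : G.Adj a b) (hbc : G.Adj b c) (hcd : G.Adj c d)
    (hde : G.Adj d e) (hea : G.Adj e a) (hac : ¬G.Adj a c) (had : ¬G.Adj a d)
    (hbd : ¬G.Adj b d) (hbe : ¬G.Adj b e) (hce : ¬G.Adj c e) : cycleGraph 5 ↪g G :=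
  Embedding.ofAdjIff (by decide) ![a, b, c, d, e] fun i j => by
    fin_cases i <;> fin_cases j <;> simp [cycleGraph_adj, adj_comm, *, hea.symm] <;> decide

def complCycleGraphSixEmbedding {a b c d e f : V} (hab : ¬G.Adj a b) (hbc : ¬G.Adj b c)
    (hcd : ¬G.Adj c d) (hde : ¬G.Adj d e) (hef : ¬G.Adj e f) (hfa : ¬G.Adj f a)
    (hac : G.Adj a c) (had : G.Adj a d) (hae : G.Adj a e) (hbd : G.Adj b d) (hbe : G.Adj b e)
    (hbf : G.Adj b f) (hce : G.Adj c e) (hcf : G.Adj c f) (hdf : G.Adj d f) :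
    (cycleGraph 6)ᶜ ↪g G :=
  Embedding.ofAdjIff (by decide) ![a, b, c, d, e, f] fun i j => by
    fin_cases i <;> fin_cases j <;>
      simp [cycleGraph_adj, adj_comm, *, mt G.adj_symm hfa] <;> decide

section TriangleAttachment

variable {r : Fin 3 → V}

theorem not_adj_of_attached_same (h2K2 : IsEmpty (twoK2 ↪g G))
    (htri : ∀ i j, i ≠ j → G.Adj (r i) (r j)) {i : Fin 3} {x y : V}
    (hx : ∀ k, G.Adj x (r k) ↔ k = i) (hy : ∀ k, G.Adj y (r k) ↔ k = i) : ¬G.Adj x y := by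
  intro hxy
  obtain ⟨a, b, hab, hai, hbi⟩ :=
    (by decide : ∀ i : Fin 3, ∃ a b : Fin 3, a ≠ b ∧ a ≠ i ∧ b ≠ i) i
  exact h2K2.false <| twoK2Embedding hxy (htri a b hab)
    ((hx a).not.2 hai) ((hx b).not.2 hbi) ((hy a).not.2 hai) ((hy b).not.2 hbi)

theorem not_adj_of_attached_distinct (hC5 : IsEmpty (cycleGraph 5 ↪g G))
    (h2K2 : IsEmpty (twoK2 ↪g G)) (hC6bar : IsEmpty ((cycleGraph 6)ᶜ ↪g G))
    (htri : ∀ i j, i ≠ j → G.Adj (r i) (r j)) {i j k : Fin 3} (hij : i ≠ j) (hik : i ≠ k)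
    (hjk : j ≠ k) {x y z : V} (hx : ∀ l, G.Adj x (r l) ↔ l = i)
    (hy : ∀ l, G.Adj y (r l) ↔ l = j) (hz : ∀ l, G.Adj z (r l) ↔ l = k) : ¬G.Adj x y := by
  intro hxy
  have hxi := (hx i).2 rfl
  have hyj := (hy j).2 rfl
  have hzk := (hz k).2 rfl
  have hxj := (hx j).not.2 hij.symm
  have hxk := (hx k).not.2 hik.symm
  have hyi := (hy i).not.2 hij
  have hyk := (hy k).not.2 hjk.symm
  have hzi := (hz i).not.2 hik
  have hzj := (hz j).not.2 hjk
  by_cases hxz : G.Adj x z <;> by_cases hyz : G.Adj y z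
  · exact hC6bar.false <| complCycleGraphSixEmbedding hxj (mt G.adj_symm hzj) hzi
      (mt G.adj_symm hyi) hyk (mt G.adj_symm hxk) hxz hxi hxy (htri j i hij.symm) hyj.symm
      (htri j k hjk) hyz.symm hzk (htri i k hik)
  · exact hC5.false <| cycleGraphFiveEmbedding hxy.symm hxz hzk (htri k j hjk.symm) hyj.symm
      hyz hyk hxk hxj hzj
  · exact hC5.false <| cycleGraphFiveEmbedding hxy hyz hzk (htri k i hik.symm) hxi.symm
      hxz hxk hyk hyi hzi
  · exact h2K2.false <| twoK2Embedding hxy hzk hxz hxk hyz hyk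

end TriangleAttachment

end SimpleGraph

theorem stmt16_general {V : Type*} (G : SimpleGraph V)
    (hC5 : IsEmpty (SimpleGraph.cycleGraph 5 ↪g G))
    (h2K2 : IsEmpty (twoK2 ↪g G))
    (hC6bar : IsEmpty ((SimpleGraph.cycleGraph 6)ᶜ ↪g G))
    (r : Fin 3 → V) (htri : ∀ i j : Fin 3, i ≠ j → G.Adj (r i) (r j))
    (S : Fin 3 → Set V)
    (hS : ∀ j : Fin 3, ∀ x ∈ S j, ∀ k : Fin 3, G.Adj x (r k) ↔ k = j)
    (hne : ∀ j : Fin 3, (S j).Nonempty) :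
    ∀ x ∈ S 0 ∪ S 1 ∪ S 2, ∀ y ∈ S 0 ∪ S 1 ∪ S 2, ¬ G.Adj x y := by
  have mem_some : ∀ x ∈ S 0 ∪ S 1 ∪ S 2, ∃ i, x ∈ S i := by
    rintro x ((h | h) | h)
    exacts [⟨0, h⟩, ⟨1, h⟩, ⟨2, h⟩]
  intro x hx y hy
  obtain ⟨i, hxi⟩ := mem_some x hx
  obtain ⟨j, hyj⟩ := mem_some y hy
  obtain rfl | hij := eq_or_ne i j
  · exact not_adj_of_attached_same h2K2 htri (hS i x hxi) (hS i y hyj)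
  obtain ⟨k, hik, hjk⟩ := (by decide : ∀ i j : Fin 3, ∃ k, i ≠ k ∧ j ≠ k) i j
  obtain ⟨z, hzk⟩ := hne k
  exact not_adj_of_attached_distinct hC5 h2K2 hC6bar htri hij hik hjk
    (hS i x hxi) (hS j y hyj) (hS k z hzk)

/-- Let `G` be (C_5, 2K_2, complement-of-C_6)-free, `{r 0, r 1, r 2}` a triangle, and
`S 0, S 1, S 2` sets of vertices outside the triangle, each vertex of `S j` being
adjacent within the triangle exactly to `r j`. If all three sets are nonempty, then
`S 0 ∪ S 1 ∪ S 2` is a stable set. -/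
theorem stmt16 {V : Type*} (G : SimpleGraph V)
    (hC5 : IsEmpty (SimpleGraph.cycleGraph 5 ↪g G))
    (h2K2 : IsEmpty (twoK2 ↪g G))
    (hC6bar : IsEmpty ((SimpleGraph.cycleGraph 6)ᶜ ↪g G))
    (r : Fin 3 → V) (htri : ∀ i j : Fin 3, i ≠ j → G.Adj (r i) (r j))
    (S : Fin 3 → Set V)
    (hout : ∀ j : Fin 3, ∀ x ∈ S j, ∀ k : Fin 3, x ≠ r k)
    (hS : ∀ j : Fin 3, ∀ x ∈ S j, ∀ k : Fin 3, G.Adj x (r k) ↔ k = j)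
    (hne : ∀ j : Fin 3, (S j).Nonempty) :
    ∀ x ∈ S 0 ∪ S 1 ∪ S 2, ∀ y ∈ S 0 ∪ S 1 ∪ S 2, ¬ G.Adj x y :=
  stmt16_general G hC5 h2K2 hC6bar r htri S hS hne
end

section
/- For every n ≥ 1, the complement of the disjoint union of n copies of C_5 has clique number 2n and chromatic number 3n; hence there exist (P_5, kite)-free graphs G with χ(G) = ⌊3ω(G)/2⌋ for every even clique number. -/
open SimpleGraph

/-- The kite: a path 0-1-2-3 plus a vertex 4 adjacent to 0, 1, 2. -/
def kite : SimpleGraph (Fin 5) :=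
  SimpleGraph.fromEdgeSet {s(0, 1), s(1, 2), s(2, 3), s(4, 0), s(4, 1), s(4, 2)}

/-- `nC₅ n`: the disjoint union of `n` copies of the 5-cycle `C_5`. -/
def nC5 (n : ℕ) : SimpleGraph (Fin n × Fin 5) where
  Adj x y := x.1 = y.1 ∧ (SimpleGraph.cycleGraph 5).Adj x.2 y.2
  symm := ⟨fun x y h => ⟨h.1.symm, (SimpleGraph.cycleGraph 5).adj_symm h.2⟩⟩
  loopless := ⟨fun x h => (SimpleGraph.cycleGraph 5).loopless.irrefl x.2 h.2⟩

/-!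
In the complement `G` of `n C₅`, vertices of different copies are adjacent and each copy
induces `C₅ᶜ ≅ C₅`. So a clique of `G` meets each copy in at most `ω(C₅) = 2` vertices, and in
any colouring of `G` the copies use pairwise disjoint sets of at least `χ(C₅) = 3` colours;
two non-adjacent vertices, resp. a `3`-colouring, in each copy attain both bounds. Finally
`P₅ᶜ` and `kiteᶜ` have a vertex of degree `3`, so neither is an induced subgraph of the
`2`-regular graph `n C₅`.
-/

open Finset

namespace SimpleGraph

variable {V W α : Type*} {G : SimpleGraph V}

theorem IsClique.card_lt_of_cliqueFree {n : ℕ} {s : Finset V} (hG : G.CliqueFree n)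
    (hs : G.IsClique (s : Set V)) : #s < n := by
  by_contra! h
  obtain ⟨t, hts, rfl⟩ := exists_subset_card_eq h
  exact hG t ⟨hs.subset (coe_subset.2 hts), rfl⟩

theorem Coloring.chromaticNumber_le_card_image [Fintype V] [DecidableEq α] (C : G.Coloring α) :
    G.chromaticNumber ≤ #(univ.image C) := by
  let D : G.Coloring (univ.image C) :=
    Coloring.mk (fun v => ⟨C v, mem_image_of_mem C (mem_univ v)⟩)
      fun h heq => C.valid h (congrArg Subtype.val heq)
  simpa using D.colorable.chromaticNumber_le

theorem isEmpty_embedding_compl_of_compl_adj {H : SimpleGraph W}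
    (hG : ∀ x a b c, G.Adj x a → G.Adj x b → G.Adj x c → a = b ∨ a = c ∨ b = c)
    {v a b c : W} (ha : Hᶜ.Adj v a) (hb : Hᶜ.Adj v b) (hc : Hᶜ.Adj v c)
    (hab : a ≠ b) (hac : a ≠ c) (hbc : b ≠ c) : IsEmpty (H ↪g Gᶜ) := by
  refine ⟨fun f => ?_⟩
  have hf : ∀ {w}, Hᶜ.Adj v w → G.Adj (f v) (f w) := fun h =>
    (compl_compl G).le ((Embedding.complEquiv f).map_adj_iff.2 h)
  rcases hG _ _ _ _ (hf ha) (hf hb) (hf hc) with h | h | h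
  exacts [hab (f.injective h), hac (f.injective h), hbc (f.injective h)]

/-- Multiplication by `2` maps the non-edges `{i, i ± 2}` of `C₅` onto its edges. -/
def complCycleGraphFiveIso : (cycleGraph 5)ᶜ ≃g cycleGraph 5 where
  toFun i := 2 * i
  invFun i := 3 * i
  left_inv := by decide
  right_inv := by decide
  map_rel_iff' := by decide

theorem chromaticNumber_compl_cycleGraph_five : (cycleGraph 5)ᶜ.chromaticNumber = 3 :=
  (chromaticNumber_congr complCycleGraphFiveIso).trans
    (chromaticNumber_cycleGraph_of_odd 5 (by norm_num) (by decide))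

theorem cliqueFree_three_compl_cycleGraph_five : (cycleGraph 5)ᶜ.CliqueFree 3 := by
  have : ∀ a b c : Fin 5, ¬((cycleGraph 5)ᶜ.Adj a b ∧ (cycleGraph 5)ᶜ.Adj a c ∧
      (cycleGraph 5)ᶜ.Adj b c) := by decide
  intro s hs
  obtain ⟨a, b, c, hab, hac, hbc, -⟩ := is3Clique_iff.1 hs
  exact this a b c ⟨hab, hac, hbc⟩

theorem cycleGraph_five_eq_or_eq_or_eq_of_adj :
    ∀ x a b c : Fin 5, (cycleGraph 5).Adj x a → (cycleGraph 5).Adj x b →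
      (cycleGraph 5).Adj x c → a = b ∨ a = c ∨ b = c := by
  decide

end SimpleGraph

namespace nC5

variable {n : ℕ} {α : Type*}

theorem adj_iff {x y : Fin n × Fin 5} :
    (nC5 n).Adj x y ↔ x.1 = y.1 ∧ (cycleGraph 5).Adj x.2 y.2 :=
  Iff.rfl

theorem compl_adj_of_fst_ne {x y : Fin n × Fin 5} (h : x.1 ≠ y.1) : (nC5 n)ᶜ.Adj x y :=
  ⟨fun hxy => h (congrArg Prod.fst hxy), fun hxy => h hxy.1⟩

def copy (k : Fin n) : (cycleGraph 5)ᶜ ↪g (nC5 n)ᶜ where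
  toFun := Prod.mk k
  inj' := Prod.mk_right_injective k
  map_rel_iff' := by simp [adj_iff]

theorem eq_or_eq_or_eq_of_adj {x a b c : Fin n × Fin 5} (ha : (nC5 n).Adj x a)
    (hb : (nC5 n).Adj x b) (hc : (nC5 n).Adj x c) : a = b ∨ a = c ∨ b = c := by
  obtain ⟨hka, ha⟩ := ha
  obtain ⟨hkb, hb⟩ := hb
  obtain ⟨hkc, hc⟩ := hc
  simpa [Prod.ext_iff, ← hka, ← hkb, ← hkc] using
    cycleGraph_five_eq_or_eq_or_eq_of_adj _ _ _ _ ha hb hc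

theorem card_filter_fst_eq_le_two {s : Finset (Fin n × Fin 5)}
    (hs : (nC5 n)ᶜ.IsClique (s : Set (Fin n × Fin 5))) (k : Fin n) :
    #{x ∈ s | x.1 = k} ≤ 2 := by
  have hinj : Set.InjOn Prod.snd (({x ∈ s | x.1 = k} : Finset _) : Set (Fin n × Fin 5)) := by
    intro x hx y hy h
    simp only [coe_filter, Set.mem_ofPred_eq] at hx hy
    exact Prod.ext (hx.2.trans hy.2.symm) h
  have hclique : (cycleGraph 5)ᶜ.IsClique ({x ∈ s | x.1 = k}.image Prod.snd : Set (Fin 5)) := by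
    simp only [coe_image, coe_filter]
    rintro _ ⟨⟨l, a⟩, ⟨ha, hl⟩, rfl⟩ _ ⟨⟨l', b⟩, ⟨hb, hl'⟩, rfl⟩ hab
    subst hl hl'
    exact (copy _).map_adj_iff.1 (hs ha hb fun h => hab (congrArg Prod.snd h))
  rw [← card_image_of_injOn hinj]
  exact Nat.le_of_lt_succ (hclique.card_lt_of_cliqueFree cliqueFree_three_compl_cycleGraph_five)

theorem isClique_univ_product {t : Finset (Fin 5)}
    (ht : (cycleGraph 5)ᶜ.IsClique (t : Set (Fin 5))) :
    (nC5 n)ᶜ.IsClique ((univ ×ˢ t : Finset (Fin n × Fin 5)) : Set (Fin n × Fin 5)) := by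
  rintro ⟨k, a⟩ hx ⟨l, b⟩ hy hxy
  simp only [coe_product, coe_univ, Set.mem_prod, Set.mem_univ, true_and, mem_coe] at hx hy
  obtain rfl | hkl := eq_or_ne k l
  · exact (copy k).map_adj_iff.2 (ht hx hy fun hab => hxy (hab ▸ rfl))
  · exact compl_adj_of_fst_ne hkl

theorem cliqueNum_compl : (nC5 n)ᶜ.cliqueNum = 2 * n := by
  refine le_antisymm ?_ ?_
  · obtain ⟨s, hs⟩ := (nC5 n)ᶜ.exists_isNClique_cliqueNum
    calc (nC5 n)ᶜ.cliqueNum = #s := hs.card_eq.symm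
      _ ≤ 2 * #(s.image Prod.fst) :=
        card_le_mul_card_image s 2 fun k _ => card_filter_fst_eq_le_two hs.isClique k
      _ ≤ 2 * n := by grw [card_le_univ, Fintype.card_fin]
  · have h02 : (cycleGraph 5)ᶜ.IsClique (({0, 2} : Finset (Fin 5)) : Set (Fin 5)) := by
      rw [coe_pair, isClique_pair]
      decide
    simpa [mul_comm] using (isClique_univ_product (n := n) h02).card_le_cliqueNum

def coloringCompl (C : (cycleGraph 5)ᶜ.Coloring α) : (nC5 n)ᶜ.Coloring (Fin n × α) :=
  Coloring.mk (fun x => (x.1, C x.2)) fun {x y} hxy heq => by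
    obtain ⟨k, a⟩ := x
    obtain ⟨l, b⟩ := y
    obtain ⟨rfl, hC⟩ := Prod.ext_iff.1 heq
    exact C.valid ((copy k).map_adj_iff.1 hxy) hC

theorem colorable_compl : (nC5 n)ᶜ.Colorable (3 * n) := by
  obtain ⟨C⟩ : (cycleGraph 5)ᶜ.Colorable 3 :=
    chromaticNumber_le_iff_colorable.1 chromaticNumber_compl_cycleGraph_five.le
  simpa [mul_comm] using (coloringCompl (n := n) C).colorable

theorem three_mul_le_card_of_coloring [Fintype α] [DecidableEq α] (C : (nC5 n)ᶜ.Coloring α) :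
    3 * n ≤ Fintype.card α := by
  set T : Fin n → Finset α := fun k => univ.image (C.comp (copy k).toHom)
  have hT : ∀ k, 3 ≤ #(T k) := fun k => by
    have := Coloring.chromaticNumber_le_card_image (C.comp (copy k).toHom)
    rw [chromaticNumber_compl_cycleGraph_five] at this
    exact_mod_cast this
  have hdisj : ((univ : Finset (Fin n)) : Set (Fin n)).PairwiseDisjoint T := by
    intro k _ l _ hkl
    simp only [Function.onFun, Finset.disjoint_left, T, mem_image, mem_univ, true_and]
    rintro _ ⟨a, rfl⟩ ⟨b, hb⟩
    exact C.valid (compl_adj_of_fst_ne (x := (l, b)) (y := (k, a)) hkl.symm) hb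
  calc 3 * n = ∑ _k : Fin n, 3 := by simp [mul_comm]
    _ ≤ ∑ k, #(T k) := sum_le_sum fun k _ => hT k
    _ = #(univ.biUnion T) := (card_biUnion hdisj).symm
    _ ≤ Fintype.card α := card_le_univ _

theorem chromaticNumber_compl : (nC5 n)ᶜ.chromaticNumber = (3 * n : ℕ) :=
  le_antisymm colorable_compl.chromaticNumber_le <| le_chromaticNumber_iff_coloring.2
    fun m C => by simpa using three_mul_le_card_of_coloring C

end nC5

theorem stmt17_general (n : ℕ) :
    ((nC5 n)ᶜ).cliqueNum = 2 * n ∧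
    ((nC5 n)ᶜ).chromaticNumber = (3 * n : ℕ) ∧
    IsEmpty (SimpleGraph.pathGraph 5 ↪g (nC5 n)ᶜ) ∧
    IsEmpty (kite ↪g (nC5 n)ᶜ) := by
  refine ⟨nC5.cliqueNum_compl, nC5.chromaticNumber_compl, ?_, ?_⟩
  · exact isEmpty_embedding_compl_of_compl_adj (fun _ _ _ _ => nC5.eq_or_eq_or_eq_of_adj)
      (v := 0) (a := 2) (b := 3) (c := 4) (by simp [pathGraph_adj]) (by simp [pathGraph_adj])
      (by simp [pathGraph_adj]) (by decide) (by decide) (by decide)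
  · exact isEmpty_embedding_compl_of_compl_adj (fun _ _ _ _ => nC5.eq_or_eq_or_eq_of_adj)
      (v := 3) (a := 0) (b := 1) (c := 4) (by simp [kite]) (by simp [kite]) (by simp [kite])
      (by decide) (by decide) (by decide)

/-- For every `n ≥ 1`, the complement of `n·C_5` has clique number `2n`, chromatic
number `3n`, and is (P_5, kite)-free; so there are (P_5, kite)-free graphs `G` with
`χ(G) = ⌊3ω(G)/2⌋` for every even clique number. -/
theorem stmt17 (n : ℕ) (hn : 1 ≤ n) :
    ((nC5 n)ᶜ).cliqueNum = 2 * n ∧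
    ((nC5 n)ᶜ).chromaticNumber = (3 * n : ℕ) ∧
    IsEmpty (SimpleGraph.pathGraph 5 ↪g (nC5 n)ᶜ) ∧
    IsEmpty (kite ↪g (nC5 n)ᶜ) :=
  stmt17_general n
end

section
/- Let G be a 2K_2-free graph with the 5-cycle blow-up structure A_1,...,A_5 and sets B_i as above (B_i vertices have a neighbor in each of A_i, A_{i-2}, A_{i+2}, are anticomplete to A_{i-1} ∪ A_{i+1}, and are complete to A_i). Then every vertex of B_i is complete to A_{i+2} or complete to A_{i-2}. -/
/-!
Suppose `b ∈ B_i` has a non-neighbour `a ∈ A_{i+2}` and a non-neighbour `a' ∈ A_{i-2}`.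
Then `b v_i` and `a a'` are edges (`B_i` is complete to `A_i`, `A_{i+2}` to `A_{i-2}`), and
there is no edge between them (`A_i` is anticomplete to `A_{i±2}`), so `{b, v_i, a, a'}`
induces a `2K_2`.
-/

open SimpleGraph

theorem twoK2_embedding_of_adj {V : Type*} {G : SimpleGraph V} {b c a a' : V}
    (hbc : G.Adj b c) (haa' : G.Adj a a') (hba : ¬ G.Adj b a) (hba' : ¬ G.Adj b a')
    (hca : ¬ G.Adj c a) (hca' : ¬ G.Adj c a') : Nonempty (twoK2 ↪g G) := by
  have hb : b ≠ a ∧ b ≠ a' :=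
    ⟨by rintro rfl; exact hba' haa', by rintro rfl; exact hba haa'.symm⟩
  have hc : c ≠ a ∧ c ≠ a' :=
    ⟨by rintro rfl; exact hca' haa', by rintro rfl; exact hca haa'.symm⟩
  refine ⟨⟨⟨![b, c, a, a'], ?_⟩, ?_⟩⟩
  · intro x y
    fin_cases x <;> fin_cases y <;> simp_all [eq_comm, hbc.ne, haa'.ne]
  · intro x y
    change G.Adj (![b, c, a, a'] x) (![b, c, a, a'] y) ↔ twoK2.Adj x y
    fin_cases x <;> fin_cases y <;> simp_all [twoK2, G.adj_comm]

theorem stmt19_general {V : Type*} (G : SimpleGraph V)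
    (h2K2 : IsEmpty (twoK2 ↪g G))
    (A : Fin 5 → Set V) (v : Fin 5 → V) (hv : ∀ i, v i ∈ A i)
    (hcomp : ∀ i : Fin 5, ∀ a ∈ A i, ∀ b ∈ A (i + 1), G.Adj a b)
    (hanti : ∀ i : Fin 5, ∀ a ∈ A i, ∀ b ∈ A (i + 2), ¬ G.Adj a b)
    (i : Fin 5) (b : V)
    (hbi : ∀ a ∈ A i, G.Adj b a) :
    (∀ a ∈ A (i + 2), G.Adj b a) ∨ (∀ a ∈ A (i - 2), G.Adj b a) := by
  by_contra! hcon
  obtain ⟨⟨a, ha, hba⟩, a', ha', hba'⟩ := hcon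
  have haa' : G.Adj a a' := hcomp (i + 2) a ha a' (by rwa [show i + 2 + 1 = i - 2 by grind])
  have hva : ¬ G.Adj (v i) a := hanti i (v i) (hv i) a ha
  have hva' : ¬ G.Adj (v i) a' :=
    fun h => hanti (i - 2) a' ha' (v i) (by simpa using hv i) h.symm
  exact (twoK2_embedding_of_adj (hbi (v i) (hv i)) haa' hba hba' hva hva').elim h2K2.false

/-- In a 2K_2-free graph with a 5-cycle blow-up structure `A 0, …, A 4` (each `A i`
complete to `A (i±1)`, anticomplete to `A (i±2)`, with `v i ∈ A i`), every vertex `b`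
outside `A` that is complete to `A i`, has a neighbor in each of `A (i+2)` and
`A (i-2)`, and is anticomplete to `A (i+1) ∪ A (i-1)`, is complete to `A (i+2)` or
complete to `A (i-2)`. -/
theorem stmt19 {V : Type*} (G : SimpleGraph V)
    (h2K2 : IsEmpty (twoK2 ↪g G))
    (A : Fin 5 → Set V) (v : Fin 5 → V) (hv : ∀ i, v i ∈ A i)
    (hcomp : ∀ i : Fin 5, ∀ a ∈ A i, ∀ b ∈ A (i + 1), G.Adj a b)
    (hanti : ∀ i : Fin 5, ∀ a ∈ A i, ∀ b ∈ A (i + 2), ¬ G.Adj a b)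
    (i : Fin 5) (b : V) (hb : ∀ j, b ∉ A j)
    (hbi : ∀ a ∈ A i, G.Adj b a)
    (hbp : ∃ a ∈ A (i + 2), G.Adj b a)
    (hbm : ∃ a ∈ A (i - 2), G.Adj b a)
    (hbanti : ∀ a, a ∈ A (i + 1) ∪ A (i - 1) → ¬ G.Adj b a) :
    (∀ a ∈ A (i + 2), G.Adj b a) ∨ (∀ a ∈ A (i - 2), G.Adj b a) :=
  stmt19_general G h2K2 A v hv hcomp hanti i b hbi
end
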